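/- arXiv:q-alg/9608007 — 3 statements merged into one kernel-verified Lean document; each statement's English description precedes it below -/
import Mathlib

section
/- Suppose μ ≥ 1, n ≥ l ≥ 1 are natural numbers, f : Fin μ → ℚ satisfies (f p)² = 1 for all p, and the constants ν : ℚ → ℕ → ℕ → ℚ satisfy ν(f p, 0, m) = −(f p) if m = 0 and ν(f p, 0, m) = 0 if m ≥ 1. Then for every multi-index i : Fin μ → ℕ with values in {0,1} and every multi-index j : Fin μ → ℕ with j₁ = 0, one has F^{n,l}(i[1 ↦ 1], j) = F^{n,l}(i[1 ↦ 0], j), where i[1 ↦ c] denotes i with its first coordinate replaced by c. (This is identity (13) of the paper, the key technical identity used to prove that Ohtsuki's invariant λ_n is of finite type.) -/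
/-- The Lin–Wang quantity `F^{n,l}(i,j)` associated to a framing vector `f : Fin μ → ℚ`
and constants `ν : ℚ → ℕ → ℕ → ℚ`:
`F^{n,l}(i,j) = (−2)^{−|j|} · (∏_q (−f_q)^{i_q}) · Σ_m ∏_p (ν(f_p, j_p, m_p))^{i_p}`,
where the sum runs over all multi-indices `m : Fin μ → ℕ` with `Σ_p i_p·m_p = n − l`
and `m_p = 0` whenever `i_p = 0` (all such `m` satisfy `m p ≤ n`, so the sum may be
taken over `m` with `m p < n + 1`). -/
def OhtsukiF (μ n l : ℕ) (f : Fin μ → ℚ) (ν : ℚ → ℕ → ℕ → ℚ)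
    (i j : Fin μ → ℕ) : ℚ :=
  ((-2 : ℚ) ^ (∑ p, j p))⁻¹ * (∏ q, (-f q) ^ i q) *
    ∑ m ∈ Finset.filter
        (fun m : Fin μ → ℕ => (∑ p, i p * m p) = n - l ∧ ∀ p, i p = 0 → m p = 0)
        (Fintype.piFinset fun _ : Fin μ => Finset.range (n + 1)),
      ∏ p, ν (f p) (j p) (m p) ^ i p

/-- Identity (13) of the paper: if all framings square to one and
`ν(f,0,m) = −f·δ_{m0}`, then for `i` with values in `{0,1}` and `j` with first
coordinate zero, `F^{n,l}(i[1 ↦ 1], j) = F^{n,l}(i[1 ↦ 0], j)`. -/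
theorem ohtsukiF_update_first_eq
    (μ n l : ℕ) (hμ : 1 ≤ μ) (hl : 1 ≤ l) (hln : l ≤ n)
    (f : Fin μ → ℚ) (hf : ∀ p, (f p) ^ 2 = 1)
    (ν : ℚ → ℕ → ℕ → ℚ)
    (hν0 : ∀ p, ν (f p) 0 0 = -(f p))
    (hν1 : ∀ p, ∀ m, 1 ≤ m → ν (f p) 0 m = 0)
    (i : Fin μ → ℕ) (hi : ∀ p, i p ≤ 1)
    (j : Fin μ → ℕ) (hj : j ⟨0, hμ⟩ = 0) :
    OhtsukiF μ n l f ν (Function.update i ⟨0, hμ⟩ 1) j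
      = OhtsukiF μ n l f ν (Function.update i ⟨0, hμ⟩ 0) j := by
  classical
  set q0 : Fin μ := ⟨0, hμ⟩ with hq0def
  have hfq : f q0 * f q0 = 1 := by have h := hf q0; rw [sq] at h; exact h
  have hi1q : Function.update i q0 1 q0 = 1 := Function.update_self _ _ _
  have hi0q : Function.update i q0 0 q0 = 0 := Function.update_self _ _ _
  have hi1p : ∀ p, p ≠ q0 → Function.update i q0 1 p = i p :=
    fun p hp => Function.update_of_ne hp _ _
  have hi0p : ∀ p, p ≠ q0 → Function.update i q0 0 p = i p :=
    fun p hp => Function.update_of_ne hp _ _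
  unfold OhtsukiF
  set S := Fintype.piFinset fun _ : Fin μ => Finset.range (n + 1) with hS
  set A1 := Finset.filter
      (fun m : Fin μ → ℕ =>
        (∑ p, Function.update i q0 1 p * m p) = n - l ∧
          ∀ p, Function.update i q0 1 p = 0 → m p = 0) S with hA1
  set A0 := Finset.filter
      (fun m : Fin μ → ℕ =>
        (∑ p, Function.update i q0 0 p * m p) = n - l ∧
          ∀ p, Function.update i q0 0 p = 0 → m p = 0) S with hA0
  have hsum_eq : ∀ m : Fin μ → ℕ, m q0 = 0 →
      (∑ p, Function.update i q0 1 p * m p) = ∑ p, Function.update i q0 0 p * m p := by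
    intro m hm
    refine Finset.sum_congr rfl fun p _ => ?_
    by_cases hp : p = q0
    · subst hp; simp [hm]
    · rw [hi1p p hp, hi0p p hp]
  have hsub : A0 ⊆ A1 := by
    intro m hm
    rw [hA0, Finset.mem_filter] at hm
    obtain ⟨hmS, hc, hz⟩ := hm
    have hm0 : m q0 = 0 := hz q0 hi0q
    rw [hA1, Finset.mem_filter]
    refine ⟨hmS, by rw [hsum_eq m hm0]; exact hc, fun p hp => ?_⟩
    by_cases hpq : p = q0
    · subst hpq; exact hm0
    · exact hz p (by rw [hi0p p hpq]; rw [hi1p p hpq] at hp; exact hp)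
  have hvanish : ∀ m ∈ A1, m ∉ A0 →
      (∏ p, ν (f p) (j p) (m p) ^ Function.update i q0 1 p) = 0 := by
    intro m hm1 hm0
    rw [hA1, Finset.mem_filter] at hm1
    obtain ⟨hmS, hc, hz⟩ := hm1
    have hm0' : m q0 ≠ 0 := by
      intro h0
      apply hm0
      rw [hA0, Finset.mem_filter]
      refine ⟨hmS, by rw [← hsum_eq m h0]; exact hc, fun p hp => ?_⟩
      by_cases hpq : p = q0
      · subst hpq; exact h0
      · exact hz p (by rw [hi1p p hpq]; rw [hi0p p hpq] at hp; exact hp)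
    refine Finset.prod_eq_zero (Finset.mem_univ q0) ?_
    rw [hi1q, pow_one, hj, hν1 q0 _ (Nat.one_le_iff_ne_zero.mpr hm0')]
  have hsum1 :
      (∑ m ∈ A1, ∏ p, ν (f p) (j p) (m p) ^ Function.update i q0 1 p)
        = ∑ m ∈ A0, ∏ p, ν (f p) (j p) (m p) ^ Function.update i q0 1 p :=
    (Finset.sum_subset hsub hvanish).symm
  have hterm : ∀ m ∈ A0,
      (∏ p, ν (f p) (j p) (m p) ^ Function.update i q0 1 p)
        = (-(f q0)) * ∏ p, ν (f p) (j p) (m p) ^ Function.update i q0 0 p := by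
    intro m hm
    rw [hA0, Finset.mem_filter] at hm
    have hm0 : m q0 = 0 := hm.2.2 q0 hi0q
    rw [← Finset.mul_prod_erase Finset.univ
        (fun p => ν (f p) (j p) (m p) ^ Function.update i q0 1 p) (Finset.mem_univ q0),
      ← Finset.mul_prod_erase Finset.univ
        (fun p => ν (f p) (j p) (m p) ^ Function.update i q0 0 p) (Finset.mem_univ q0)]
    rw [hi1q, hi0q, pow_one, pow_zero, one_mul, hm0, hj, hν0 q0]
    congr 1
    refine Finset.prod_congr rfl fun p hp => ?_
    have hpq : p ≠ q0 := Finset.ne_of_mem_erase hp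
    rw [hi1p p hpq, hi0p p hpq]
  have hpref : (∏ q, (-f q) ^ Function.update i q0 1 q)
      = (-(f q0)) * ∏ q, (-f q) ^ Function.update i q0 0 q := by
    rw [← Finset.mul_prod_erase Finset.univ
        (fun q => (-f q) ^ Function.update i q0 1 q) (Finset.mem_univ q0),
      ← Finset.mul_prod_erase Finset.univ
        (fun q => (-f q) ^ Function.update i q0 0 q) (Finset.mem_univ q0)]
    rw [hi1q, hi0q, pow_one, pow_zero, one_mul]
    congr 1
    refine Finset.prod_congr rfl fun p hp => ?_
    have hpq : p ≠ q0 := Finset.ne_of_mem_erase hp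
    rw [hi1p p hpq, hi0p p hpq]
  rw [hsum1, Finset.sum_congr rfl hterm, ← Finset.mul_sum, hpref]
  set C : ℚ := ((-2 : ℚ) ^ (∑ p, j p))⁻¹
  set X : ℚ := ∏ q, (-f q) ^ Function.update i q0 0 q
  set Y : ℚ := ∑ m ∈ A0, ∏ p, ν (f p) (j p) (m p) ^ Function.update i q0 0 p
  linear_combination C * X * Y * hfq
end

section
/- Suppose μ ≥ 1, n ≥ l ≥ 1 are natural numbers, f : Fin μ → ℚ satisfies (f p)² = 1 for all p, and the constants ν : ℚ → ℕ → ℕ → ℚ satisfy ν(f p, 0, m) = −(f p) if m = 0 and ν(f p, 0, m) = 0 if m ≥ 1. Let j : Fin μ → ℕ be a multi-index for which the set S = {p : j_p = 0} is nonempty. Then the alternating sum Σ_i (−1)^{|i|} F^{n,l}(i, j) equals 0, where the sum runs over all i : Fin μ → ℕ with values in {0,1} such that i_p = 1 for every p ∉ S (i.e. i is arbitrary in {0,1} on the coordinates where j vanishes and equals 1 elsewhere), and |i| = Σ_p i_p. (This is the vanishing G^{n,l}(L,j) = 0 when some j_p = 0, equation (20) of the paper.) -/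
lemma ohtsukiF_update (μ n l : ℕ) (f : Fin μ → ℚ) (hf : ∀ p, (f p) ^ 2 = 1)
    (ν : ℚ → ℕ → ℕ → ℚ)
    (hν0 : ∀ p, ν (f p) 0 0 = -(f p))
    (hν1 : ∀ p, ∀ m, 1 ≤ m → ν (f p) 0 m = 0)
    (j : Fin μ → ℕ) (p₀ : Fin μ) (hj0 : j p₀ = 0)
    (i : Fin μ → ℕ) (hi0 : i p₀ = 0) :
    OhtsukiF μ n l f ν (Function.update i p₀ 1) j = OhtsukiF μ n l f ν i j := by
  classical
  set i' := Function.update i p₀ 1 with hi'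
  have hi'p₀ : i' p₀ = 1 := Function.update_self _ _ _
  have hi'ne : ∀ p, p ≠ p₀ → i' p = i p := fun p hp => Function.update_of_ne hp _ _
  unfold OhtsukiF
  -- product equality for m with m p₀ = 0
  have hprod : ∀ m : Fin μ → ℕ, m p₀ = 0 →
      (∏ p, ν (f p) (j p) (m p) ^ i' p) = (-(f p₀)) * ∏ p, ν (f p) (j p) (m p) ^ i p := by
    intro m hm
    rw [← Finset.prod_erase_mul _ _ (Finset.mem_univ p₀),
        ← Finset.prod_erase_mul (f := fun p => ν (f p) (j p) (m p) ^ i p) _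
          (Finset.mem_univ p₀)]
    have h1 : ∏ p ∈ Finset.univ.erase p₀, ν (f p) (j p) (m p) ^ i' p
        = ∏ p ∈ Finset.univ.erase p₀, ν (f p) (j p) (m p) ^ i p :=
      Finset.prod_congr rfl fun p hp => by
        rw [hi'ne p (Finset.ne_of_mem_erase hp)]
    rw [h1, hi'p₀, hi0, hj0, hm, hν0, pow_one, pow_zero, mul_one]
    ring
  -- set equality
  have hset : (Finset.filter
        (fun m : Fin μ → ℕ => (∑ p, i' p * m p) = n - l ∧ ∀ p, i' p = 0 → m p = 0)
        (Fintype.piFinset fun _ : Fin μ => Finset.range (n + 1))).filter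
        (fun m => m p₀ = 0)
      = Finset.filter
        (fun m : Fin μ → ℕ => (∑ p, i p * m p) = n - l ∧ ∀ p, i p = 0 → m p = 0)
        (Fintype.piFinset fun _ : Fin μ => Finset.range (n + 1)) := by
    ext m
    simp only [Finset.mem_filter, and_assoc]
    constructor
    · rintro ⟨hmem, hsum, hzero, hm0⟩
      refine ⟨hmem, ?_, ?_⟩
      · rw [← hsum]
        refine Finset.sum_congr rfl fun p _ => ?_
        by_cases hp : p = p₀
        · subst hp; rw [hm0, Nat.mul_zero, Nat.mul_zero]
        · rw [hi'ne p hp]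
      · intro p hp
        by_cases hpp : p = p₀
        · subst hpp; exact hm0
        · exact hzero p (by rw [hi'ne p hpp]; exact hp)
    · rintro ⟨hmem, hsum, hzero⟩
      have hm0 : m p₀ = 0 := hzero p₀ hi0
      refine ⟨hmem, ?_, ?_, hm0⟩
      · rw [← hsum]
        refine Finset.sum_congr rfl fun p _ => ?_
        by_cases hp : p = p₀
        · subst hp; rw [hm0, Nat.mul_zero, Nat.mul_zero]
        · rw [hi'ne p hp]
      · intro p hp
        by_cases hpp : p = p₀
        · subst hpp; exact hm0
        · exact hzero p (by rw [← hi'ne p hpp]; exact hp)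
  -- the sum over i' equals (-f p₀) times the sum over i
  have hsum : (∑ m ∈ Finset.filter
        (fun m : Fin μ → ℕ => (∑ p, i' p * m p) = n - l ∧ ∀ p, i' p = 0 → m p = 0)
        (Fintype.piFinset fun _ : Fin μ => Finset.range (n + 1)),
        ∏ p, ν (f p) (j p) (m p) ^ i' p)
      = (-(f p₀)) * ∑ m ∈ Finset.filter
        (fun m : Fin μ → ℕ => (∑ p, i p * m p) = n - l ∧ ∀ p, i p = 0 → m p = 0)
        (Fintype.piFinset fun _ : Fin μ => Finset.range (n + 1)),
        ∏ p, ν (f p) (j p) (m p) ^ i p := by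
    rw [← Finset.sum_filter_of_ne (p := fun m => m p₀ = 0)
      (fun m _ hne => by
        by_contra hm0
        apply hne
        rw [← Finset.prod_erase_mul _ _ (Finset.mem_univ p₀), hi'p₀, hj0, pow_one,
          hν1 p₀ (m p₀) (Nat.one_le_iff_ne_zero.2 hm0), mul_zero])]
    rw [hset, Finset.mul_sum]
    refine Finset.sum_congr rfl fun m hm => ?_
    exact hprod m ((Finset.mem_filter.1 hm).2.2 p₀ hi0)
  rw [hsum]
  have hqprod : (∏ q, (-f q) ^ i' q) = (-(f p₀)) * ∏ q, (-f q) ^ i q := by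
    rw [← Finset.prod_erase_mul _ _ (Finset.mem_univ p₀),
        ← Finset.prod_erase_mul (f := fun q => (-f q) ^ i q) _ (Finset.mem_univ p₀)]
    have h1 : ∏ q ∈ Finset.univ.erase p₀, (-f q) ^ i' q
        = ∏ q ∈ Finset.univ.erase p₀, (-f q) ^ i q :=
      Finset.prod_congr rfl fun q hq => by rw [hi'ne q (Finset.ne_of_mem_erase hq)]
    rw [h1, hi'p₀, hi0, pow_one, pow_zero, mul_one]
    ring
  rw [hqprod]
  have h2 : (-(f p₀)) * (-(f p₀)) = 1 := by rw [neg_mul_neg, ← sq, hf p₀]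
  calc ((-2 : ℚ) ^ (∑ p, j p))⁻¹ * ((-(f p₀)) * ∏ q, (-f q) ^ i q) *
      ((-(f p₀)) * ∑ m ∈ Finset.filter
        (fun m : Fin μ → ℕ => (∑ p, i p * m p) = n - l ∧ ∀ p, i p = 0 → m p = 0)
        (Fintype.piFinset fun _ : Fin μ => Finset.range (n + 1)),
        ∏ p, ν (f p) (j p) (m p) ^ i p)
      = ((-(f p₀)) * (-(f p₀))) * (((-2 : ℚ) ^ (∑ p, j p))⁻¹ * (∏ q, (-f q) ^ i q) *
        ∑ m ∈ Finset.filter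
        (fun m : Fin μ → ℕ => (∑ p, i p * m p) = n - l ∧ ∀ p, i p = 0 → m p = 0)
        (Fintype.piFinset fun _ : Fin μ => Finset.range (n + 1)),
        ∏ p, ν (f p) (j p) (m p) ^ i p) := by ring
    _ = _ := by rw [h2, one_mul]

/-- Equation (20) of the paper: if some coordinate of `j` vanishes, then the
alternating sum `G^{n,l}(L,j) = Σ_i (−1)^{|i|} F^{n,l}(i,j)` over all `i` with values
in `{0,1}` which equal `1` on the coordinates where `j` is nonzero, is zero. -/
theorem ohtsukiG_eq_zero
    (μ n l : ℕ) (hμ : 1 ≤ μ) (hl : 1 ≤ l) (hln : l ≤ n)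
    (f : Fin μ → ℚ) (hf : ∀ p, (f p) ^ 2 = 1)
    (ν : ℚ → ℕ → ℕ → ℚ)
    (hν0 : ∀ p, ν (f p) 0 0 = -(f p))
    (hν1 : ∀ p, ∀ m, 1 ≤ m → ν (f p) 0 m = 0)
    (j : Fin μ → ℕ) (hj : ∃ p, j p = 0) :
    ∑ i ∈ Finset.filter (fun i : Fin μ → ℕ => ∀ p, j p ≠ 0 → i p = 1)
        (Fintype.piFinset fun _ : Fin μ => ({0, 1} : Finset ℕ)),
      (-1 : ℚ) ^ (∑ p, i p) * OhtsukiF μ n l f ν i j = 0 := by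
  classical
  obtain ⟨p₀, hp₀⟩ := hj
  have hupd_sum : ∀ (i : Fin μ → ℕ) (b : ℕ),
      ∑ p, Function.update i p₀ b p = b + ∑ p ∈ Finset.univ \ {p₀}, i p :=
    fun i b => Finset.sum_update_of_mem (Finset.mem_univ p₀) i b
  have hsum_split : ∀ i : Fin μ → ℕ,
      ∑ p, i p = (∑ p ∈ Finset.univ \ {p₀}, i p) + i p₀ := by
    intro i
    rw [Finset.sum_eq_sum_sdiff_singleton_add (Finset.mem_univ p₀)]
  refine Finset.sum_involution (fun i _ => Function.update i p₀ (1 - i p₀)) ?_ ?_ ?_ ?_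
  · -- cancellation
    intro i hi
    simp only [Finset.mem_filter, Fintype.mem_piFinset] at hi
    have hib : i p₀ = 0 ∨ i p₀ = 1 := by
      have := hi.1 p₀
      simp [Finset.mem_insert] at this
      tauto
    rcases hib with h0 | h1
    · have hg : Function.update i p₀ (1 - i p₀) = Function.update i p₀ 1 := by rw [h0]
      rw [hg]
      have hF := ohtsukiF_update μ n l f hf ν hν0 hν1 j p₀ hp₀ i h0
      rw [hF, hupd_sum i 1, hsum_split i, h0, Nat.add_zero]
      ring
    · have hg : Function.update i p₀ (1 - i p₀) = Function.update i p₀ 0 := by rw [h1]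
      rw [hg]
      set i₀ := Function.update i p₀ 0 with hi₀
      have hi₀0 : i₀ p₀ = 0 := Function.update_self _ _ _
      have hieq : i = Function.update i₀ p₀ 1 := by
        funext p
        by_cases hp : p = p₀
        · rw [hp, Function.update_self, h1]
        · rw [Function.update_of_ne hp, hi₀, Function.update_of_ne hp]
      have hF := ohtsukiF_update μ n l f hf ν hν0 hν1 j p₀ hp₀ i₀ hi₀0
      rw [← hieq] at hF
      rw [hF, hupd_sum i 0, hsum_split i, h1]
      have h2 : ∑ p ∈ Finset.univ \ {p₀}, i p = ∑ p, i₀ p := by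
        rw [hupd_sum i 0, Nat.zero_add]
      rw [h2]
      ring
  · -- g ≠ id
    intro i hi _
    simp only [Finset.mem_filter, Fintype.mem_piFinset] at hi
    have hib : i p₀ = 0 ∨ i p₀ = 1 := by
      have := hi.1 p₀
      simp [Finset.mem_insert] at this
      tauto
    intro h
    have h2 := congrFun h p₀
    rw [Function.update_self] at h2
    omega
  · -- g maps into the set
    intro i hi
    simp only [Finset.mem_filter, Fintype.mem_piFinset] at hi ⊢
    constructor
    · intro p
      by_cases hp : p = p₀
      · rw [hp, Function.update_self]
        have := hi.1 p₀
        simp [Finset.mem_insert] at this ⊢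
        omega
      · rw [Function.update_of_ne hp]; exact hi.1 p
    · intro p hjp
      have hp : p ≠ p₀ := fun h => hjp (h ▸ hp₀)
      rw [Function.update_of_ne hp]
      exact hi.2 p hjp
  · -- involution
    intro i hi
    simp only [Finset.mem_filter, Fintype.mem_piFinset] at hi
    have hib : i p₀ = 0 ∨ i p₀ = 1 := by
      have := hi.1 p₀
      simp [Finset.mem_insert] at this
      tauto
    funext p
    by_cases hp : p = p₀
    · rw [hp, Function.update_self, Function.update_self]
      omega
    · rw [Function.update_of_ne hp, Function.update_of_ne hp]
end

section
/- Suppose μ ≥ 1 and n ≥ 1 are natural numbers, f : Fin μ → ℚ satisfies (f p)² = 1 for all p, and the constants ν : ℚ → ℕ → ℕ → ℚ satisfy ν(f p, 0, m) = −(f p) if m = 0 and ν(f p, 0, m) = 0 if m ≥ 1. Then for every coefficient function φ : ℕ → (Fin μ → ℕ) → ℚ one has the identity Σ_{i ∈ {0,1}^μ} (−1)^{|i|} Σ_{l=1}^{n} Σ_{j : ∀p, j_p ≤ l·i_p} φ(l, j) · F^{n,l}(i, j) = (−1)^{μ} Σ_{l=1}^{n} Σ_{j : ∀p, 1 ≤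 j_p ≤ l} φ(l, j) · F^{n,l}(𝟙, j), where 𝟙 denotes the constant multi-index (1,…,1) and |i| = Σ_p i_p. (This is the reduction, equation (21) of the paper, showing that the alternating sum of Ohtsuki invariants over sublinks collapses to the terms with all parallel indices nonzero.) -/
lemma ohtsukiF_step (μ n l : ℕ) (f : Fin μ → ℚ) (ν : ℚ → ℕ → ℕ → ℚ)
    (hf : ∀ p, (f p) ^ 2 = 1)
    (hν0 : ∀ p, ν (f p) 0 0 = -(f p))
    (hν1 : ∀ p, ∀ m, 1 ≤ m → ν (f p) 0 m = 0)
    (i j : Fin μ → ℕ) (p : Fin μ) (hip : i p = 1) (hjp : j p = 0) :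
    OhtsukiF μ n l f ν i j = OhtsukiF μ n l f ν (Function.update i p 0) j := by
  unfold OhtsukiF
  set i' := Function.update i p 0 with hi'
  have hi'p : i' p = 0 := Function.update_self p 0 i
  have hi'q : ∀ q, q ≠ p → i' q = i q := fun q hq => Function.update_of_ne hq 0 i
  set B := Fintype.piFinset fun _ : Fin μ => Finset.range (n + 1) with hB
  set t : (Fin μ → ℕ) → ℚ := fun m => ∏ q, ν (f q) (j q) (m q) ^ i q with ht
  set t' : (Fin μ → ℕ) → ℚ := fun m => ∏ q, ν (f q) (j q) (m q) ^ i' q with ht'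
  set A := Finset.filter
        (fun m : Fin μ → ℕ => (∑ q, i q * m q) = n - l ∧ ∀ q, i q = 0 → m q = 0) B with hA
  set A' := Finset.filter
        (fun m : Fin μ → ℕ => (∑ q, i' q * m q) = n - l ∧ ∀ q, i' q = 0 → m q = 0) B with hA'
  have hfilter : A.filter (fun m => m p = 0) = A' := by
    ext m
    simp only [hA, hA', Finset.mem_filter, and_assoc]
    constructor
    · rintro ⟨hm, hsum, hz, hmp⟩
      refine ⟨hm, ?_, ?_⟩
      · rw [← hsum]
        apply Finset.sum_congr rfl
        intro q _
        by_cases hq : q = p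
        · subst hq; simp [hi'p, hmp]
        · rw [hi'q q hq]
      · intro q hq
        by_cases hqp : q = p
        · subst hqp; exact hmp
        · exact hz q (by rwa [hi'q q hqp] at hq)
    · rintro ⟨hm, hsum, hz⟩
      have hmp : m p = 0 := hz p hi'p
      refine ⟨hm, ?_, ?_, hmp⟩
      · rw [← hsum]
        apply Finset.sum_congr rfl
        intro q _
        by_cases hq : q = p
        · subst hq; simp [hi'p, hmp]
        · rw [hi'q q hq]
      · intro q hq
        by_cases hqp : q = p
        · subst hqp; exact hmp
        · exact hz q (by rw [hi'q q hqp]; exact hq)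
  have hsum : ∑ m ∈ A, t m = (-(f p)) * ∑ m ∈ A', t' m := by
    rw [← Finset.sum_filter_add_sum_filter_not A (fun m => m p = 0) t]
    have h2 : ∑ m ∈ A.filter (fun m => ¬ m p = 0), t m = 0 := by
      apply Finset.sum_eq_zero
      intro m hm
      simp only [Finset.mem_filter] at hm
      apply Finset.prod_eq_zero (Finset.mem_univ p)
      rw [hjp, hip, pow_one, hν1 p (m p) (Nat.one_le_iff_ne_zero.mpr hm.2)]
    rw [h2, add_zero, hfilter, Finset.mul_sum]
    apply Finset.sum_congr rfl
    intro m hm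
    have hmp : m p = 0 := by
      simp only [hA', Finset.mem_filter] at hm
      exact hm.2.2 p hi'p
    show (∏ q, ν (f q) (j q) (m q) ^ i q) = -f p * ∏ q, ν (f q) (j q) (m q) ^ i' q
    rw [← Finset.mul_prod_erase Finset.univ _ (Finset.mem_univ p),
        ← Finset.mul_prod_erase Finset.univ (fun q => ν (f q) (j q) (m q) ^ i' q)
          (Finset.mem_univ p)]
    have : ∏ q ∈ Finset.univ.erase p, ν (f q) (j q) (m q) ^ i q
        = ∏ q ∈ Finset.univ.erase p, ν (f q) (j q) (m q) ^ i' q := by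
      apply Finset.prod_congr rfl
      intro q hq
      rw [hi'q q (Finset.mem_erase.mp hq).1]
    rw [this, hjp, hmp, hip, hi'p, pow_one, pow_zero, hν0 p, one_mul]
  have hprod : (∏ q, (-f q) ^ i q) = (-f p) * ∏ q, (-f q) ^ i' q := by
    rw [← Finset.mul_prod_erase Finset.univ _ (Finset.mem_univ p),
        ← Finset.mul_prod_erase Finset.univ (fun q => (-f q) ^ i' q) (Finset.mem_univ p),
        hip, hi'p, pow_one, pow_zero, one_mul]
    congr 1
    apply Finset.prod_congr rfl
    intro q hq
    rw [hi'q q (Finset.mem_erase.mp hq).1]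
  rw [hsum, hprod]
  have h1 : (-f p) * (-f p) = 1 := by nlinarith [hf p]
  have key : ∀ c P S : ℚ, c * (-f p * P) * (-f p * S) = (-f p * -f p) * (c * P * S) := by
    intro c P S; ring
  rw [key, h1, one_mul]

lemma ohtsukiF_collapse (μ n l : ℕ) (f : Fin μ → ℚ) (ν : ℚ → ℕ → ℕ → ℚ)
    (hf : ∀ p, (f p) ^ 2 = 1)
    (hν0 : ∀ p, ν (f p) 0 0 = -(f p))
    (hν1 : ∀ p, ∀ m, 1 ≤ m → ν (f p) 0 m = 0) :
    ∀ (k : ℕ) (i j : Fin μ → ℕ), (∑ p, i p) = k → (∀ p, i p ≤ 1) →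
      (∀ p, i p = 0 → j p = 0) →
      OhtsukiF μ n l f ν i j
        = OhtsukiF μ n l f ν (fun p => if j p = 0 then 0 else 1) j := by
  intro k
  induction k with
  | zero =>
    intro i j hs h1 h0
    have hz : ∀ p, i p = 0 := by
      have := (Finset.sum_eq_zero_iff).mp hs
      intro p; exact this p (Finset.mem_univ p)
    have : (fun p => if j p = 0 then 0 else 1) = i := by
      funext p
      simp [h0 p (hz p), hz p]
    rw [this]
  | succ k ih =>
    intro i j hs h1 h0
    by_cases hall : ∀ p, i p = if j p = 0 then 0 else 1
    · have : (fun p => if j p = 0 then 0 else 1) = i := funext fun p => (hall p).symm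
      rw [this]
    · push_neg at hall
      obtain ⟨p, hp⟩ := hall
      have hjp : j p = 0 := by
        by_contra hj
        rcases Nat.le_one_iff_eq_zero_or_eq_one.mp (h1 p) with h | h
        · exact hj (h0 p h)
        · simp [hj, h] at hp
      have hip : i p = 1 := by
        rcases Nat.le_one_iff_eq_zero_or_eq_one.mp (h1 p) with h | h
        · simp [hjp, h] at hp
        · exact h
      rw [ohtsukiF_step μ n l f ν hf hν0 hν1 i j p hip hjp]
      apply ih
      · have := Finset.add_sum_erase Finset.univ i (Finset.mem_univ p)
        have h2 := Finset.add_sum_erase Finset.univ (Function.update i p 0)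
          (Finset.mem_univ p)
        have h3 : ∑ q ∈ Finset.univ.erase p, Function.update i p 0 q
            = ∑ q ∈ Finset.univ.erase p, i q := by
          apply Finset.sum_congr rfl
          intro q hq
          exact Function.update_of_ne (Finset.mem_erase.mp hq).1 0 i
        rw [← h2, h3, Function.update_self]
        omega
      · intro q
        by_cases hq : q = p
        · subst hq; simp
        · rw [Function.update_of_ne hq]; exact h1 q
      · intro q hq
        by_cases hqp : q = p
        · subst hqp; exact hjp
        · exact h0 q (by rwa [Function.update_of_ne hqp] at hq)

/-- Equation (21) of the paper: the alternating sum over all `i ∈ {0,1}^μ` of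
`(−1)^{|i|} Σ_{l=1}^{n} Σ_{j ≤ l·i} φ(l,j)·F^{n,l}(i,j)` collapses to
`(−1)^μ Σ_{l=1}^{n} Σ_{𝟙 ≤ j ≤ l·𝟙} φ(l,j)·F^{n,l}(𝟙,j)`. -/
theorem ohtsuki_alternating_sum_collapse
    (μ n : ℕ) (hμ : 1 ≤ μ) (hn : 1 ≤ n)
    (f : Fin μ → ℚ) (hf : ∀ p, (f p) ^ 2 = 1)
    (ν : ℚ → ℕ → ℕ → ℚ)
    (hν0 : ∀ p, ν (f p) 0 0 = -(f p))
    (hν1 : ∀ p, ∀ m, 1 ≤ m → ν (f p) 0 m = 0)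
    (φ : ℕ → (Fin μ → ℕ) → ℚ) :
    ∑ i ∈ (Fintype.piFinset fun _ : Fin μ => ({0, 1} : Finset ℕ)),
      (-1 : ℚ) ^ (∑ p, i p) *
        ∑ l ∈ Finset.Icc 1 n,
          ∑ j ∈ (Fintype.piFinset fun p : Fin μ => Finset.range (l * i p + 1)),
            φ l j * OhtsukiF μ n l f ν i j
    = (-1 : ℚ) ^ μ *
        ∑ l ∈ Finset.Icc 1 n,
          ∑ j ∈ (Fintype.piFinset fun _ : Fin μ => Finset.Icc 1 l),
            φ l j * OhtsukiF μ n l f ν (fun _ => 1) j := by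
  have hstep1 : ∀ i ∈ (Fintype.piFinset fun _ : Fin μ => ({0, 1} : Finset ℕ)),
      (-1 : ℚ) ^ (∑ p, i p) *
        ∑ l ∈ Finset.Icc 1 n,
          ∑ j ∈ (Fintype.piFinset fun p : Fin μ => Finset.range (l * i p + 1)),
            φ l j * OhtsukiF μ n l f ν i j
      = ∑ l ∈ Finset.Icc 1 n,
          ∑ j ∈ (Fintype.piFinset fun _ : Fin μ => Finset.range (l + 1)),
            (if ∀ p, j p ≤ l * i p then (-1 : ℚ) ^ (∑ p, i p) else 0) *
              (φ l j * OhtsukiF μ n l f ν (fun p => if j p = 0 then 0 else 1) j) := by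
    intro i hi
    have hi1 : ∀ p, i p ≤ 1 := by
      intro p
      have := Fintype.mem_piFinset.mp hi p
      simp only [Finset.mem_insert, Finset.mem_singleton] at this
      omega
    rw [Finset.mul_sum]
    apply Finset.sum_congr rfl
    intro l hl
    have hsub : Fintype.piFinset (fun p => Finset.range (l * i p + 1))
        = (Fintype.piFinset fun _ : Fin μ => Finset.range (l + 1)).filter
            (fun j => ∀ p, j p ≤ l * i p) := by
      ext j
      simp only [Fintype.mem_piFinset, Finset.mem_filter, Finset.mem_range, Nat.lt_succ_iff]
      constructor
      · intro h
        refine ⟨fun p => le_trans (h p) ?_, h⟩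
        calc l * i p ≤ l * 1 := Nat.mul_le_mul_left l (hi1 p)
          _ = l := mul_one l
      · exact fun h => h.2
    rw [Finset.mul_sum, hsub, Finset.sum_filter]
    apply Finset.sum_congr rfl
    intro j hj
    by_cases hcond : ∀ p, j p ≤ l * i p
    · rw [if_pos hcond, if_pos hcond]
      have hcoll : OhtsukiF μ n l f ν i j
          = OhtsukiF μ n l f ν (fun p => if j p = 0 then 0 else 1) j := by
        apply ohtsukiF_collapse μ n l f ν hf hν0 hν1 (∑ p, i p) i j rfl hi1
        intro p hp
        have := hcond p
        rw [hp, Nat.mul_zero] at this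
        omega
      rw [hcoll]
    · rw [if_neg hcond, if_neg hcond, zero_mul]
  rw [Finset.sum_congr rfl hstep1, Finset.sum_comm, Finset.mul_sum]
  apply Finset.sum_congr rfl
  intro l hl
  rw [Finset.sum_comm]
  have hc : ∀ j ∈ (Fintype.piFinset fun _ : Fin μ => Finset.range (l + 1)),
      (∑ i ∈ (Fintype.piFinset fun _ : Fin μ => ({0, 1} : Finset ℕ)),
        if ∀ p, j p ≤ l * i p then (-1 : ℚ) ^ (∑ p, i p) else 0)
      = if ∀ p, 1 ≤ j p then (-1 : ℚ) ^ μ else 0 := by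
    intro j hj
    have hjl : ∀ p, j p ≤ l := by
      intro p
      have := Fintype.mem_piFinset.mp hj p
      rw [Finset.mem_range] at this
      omega
    have h1 : ∀ i ∈ (Fintype.piFinset fun _ : Fin μ => ({0, 1} : Finset ℕ)),
        (if ∀ p, j p ≤ l * i p then (-1 : ℚ) ^ (∑ p, i p) else 0)
        = ∏ p, (if j p ≤ l * i p then (-1 : ℚ) ^ (i p) else 0) := by
      intro i _
      by_cases hcond : ∀ p, j p ≤ l * i p
      · rw [if_pos hcond, Finset.prod_congr rfl (fun p _ => if_pos (hcond p)),
          Finset.prod_pow_eq_pow_sum]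
      · push_neg at hcond
        obtain ⟨p, hp⟩ := hcond
        rw [if_neg (by push_neg; exact ⟨p, hp⟩)]
        exact (Finset.prod_eq_zero (Finset.mem_univ p)
          (show (if j p ≤ l * i p then (-1 : ℚ) ^ i p else 0) = 0 from
            if_neg (not_le.mpr hp))).symm
    rw [Finset.sum_congr rfl h1]
    have hswap : (∑ x ∈ Fintype.piFinset fun _ : Fin μ => ({0, 1} : Finset ℕ),
          ∏ p, if j p ≤ l * x p then (-1 : ℚ) ^ (x p) else 0)
        = ∏ p, ∑ a ∈ ({0, 1} : Finset ℕ), if j p ≤ l * a then (-1 : ℚ) ^ a else 0 :=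
      (Finset.prod_univ_sum (fun _ : Fin μ => ({0, 1} : Finset ℕ))
        (fun p a => if j p ≤ l * a then (-1 : ℚ) ^ a else 0)).symm
    rw [hswap]
    have h2 : ∀ p, (∑ a ∈ ({0, 1} : Finset ℕ), if j p ≤ l * a then (-1 : ℚ) ^ a else 0)
        = if 1 ≤ j p then (-1 : ℚ) else 0 := by
      intro p
      rw [Finset.sum_pair (by norm_num : (0 : ℕ) ≠ 1)]
      by_cases h : j p = 0
      · simp [h]
      · have h1jp : 1 ≤ j p := by omega
        simp only [mul_zero, mul_one]
        rw [if_neg (by omega), if_pos (hjl p), if_pos h1jp]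
        norm_num
    rw [Finset.prod_congr rfl (fun p _ => h2 p)]
    by_cases hall : ∀ p, 1 ≤ j p
    · rw [if_pos hall, Finset.prod_congr rfl (fun p _ => if_pos (hall p)),
        Finset.prod_const, Finset.card_univ, Fintype.card_fin]
    · push_neg at hall
      obtain ⟨p, hp⟩ := hall
      rw [if_neg (by push_neg; exact ⟨p, hp⟩)]
      exact Finset.prod_eq_zero (Finset.mem_univ p)
        (show (if 1 ≤ j p then (-1 : ℚ) else 0) = 0 from if_neg (by omega))
  have hmain : ∀ j ∈ (Fintype.piFinset fun _ : Fin μ => Finset.range (l + 1)),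
      (∑ i ∈ (Fintype.piFinset fun _ : Fin μ => ({0, 1} : Finset ℕ)),
        (if ∀ p, j p ≤ l * i p then (-1 : ℚ) ^ (∑ p, i p) else 0) *
          (φ l j * OhtsukiF μ n l f ν (fun p => if j p = 0 then 0 else 1) j))
      = if ∀ p, 1 ≤ j p then
          (-1 : ℚ) ^ μ * (φ l j * OhtsukiF μ n l f ν (fun p => if j p = 0 then 0 else 1) j)
        else 0 := by
    intro j hj
    rw [← Finset.sum_mul, hc j hj, ite_mul, zero_mul]
  rw [Finset.sum_congr rfl hmain, Finset.sum_ite, Finset.sum_const_zero, add_zero,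
    Finset.mul_sum]
  have hset : (Fintype.piFinset fun _ : Fin μ => Finset.range (l + 1)).filter
      (fun j => ∀ p, 1 ≤ j p) = Fintype.piFinset fun _ : Fin μ => Finset.Icc 1 l := by
    ext j
    simp only [Finset.mem_filter, Fintype.mem_piFinset, Finset.mem_range, Finset.mem_Icc,
      Nat.lt_succ_iff]
    constructor
    · rintro ⟨h1, h2⟩ p; exact ⟨h2 p, h1 p⟩
    · intro h; exact ⟨fun p => (h p).2, fun p => (h p).1⟩
  rw [hset]
  apply Finset.sum_congr rfl
  intro j hj
  have : (fun p => if j p = 0 then 0 else 1) = (fun _ : Fin μ => 1) := by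
    funext p
    have := (Fintype.mem_piFinset.mp hj p)
    rw [Finset.mem_Icc] at this
    rw [if_neg (by omega)]
  rw [this]
end
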